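/- The differential operators π_l(e) = -∂/∂x, π_l(h) = ζ∂/∂ζ - 2x∂/∂x, π_l(f) = -xζ∂/∂ζ + x²∂/∂x + ζ⁻²∂/∂y acting on C[x,y,ζ,ζ⁻¹] satisfy the sl₂ commutation relations [π_l(h),π_l(e)] = 2π_l(e), [π_l(h),π_l(f)] = -2π_l(f), [π_l(e),π_l(f)] = π_l(h). -/
import Mathlib


/- STATEMENT 0: The differential operators
   π_l(e) = -∂/∂x, π_l(h) = ζ∂/∂ζ - 2x∂/∂x, π_l(f) = -xζ∂/∂ζ + x²∂/∂x + ζ⁻²∂/∂y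
   acting on ℂ[x,y,ζ,ζ⁻¹] satisfy the sl₂ commutation relations. -/

noncomputable section

/-- The ring ℂ[x,y,ζ,ζ⁻¹] realized as the free ℂ-module on monomials x^m y^n ζ^k. -/
abbrev RMod : Type := (ℕ × ℕ × ℤ) →₀ ℂ

/-- The linear operator sending each basis monomial `p` to `b p`. -/
def opOf (b : ℕ × ℕ × ℤ → RMod) : Module.End ℂ RMod :=
  Finsupp.lsum ℂ fun p => LinearMap.toSpanSingleton ℂ RMod (b p)

/-- ∂/∂x -/
def Dx : Module.End ℂ RMod :=
  opOf fun p => (p.1 : ℂ) • Finsupp.single (p.1 - 1, p.2.1, p.2.2) 1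

/-- ∂/∂y -/
def Dy : Module.End ℂ RMod :=
  opOf fun p => (p.2.1 : ℂ) • Finsupp.single (p.1, p.2.1 - 1, p.2.2) 1

/-- the Euler operator ζ∂/∂ζ -/
def Eul : Module.End ℂ RMod :=
  opOf fun p => (p.2.2 : ℂ) • Finsupp.single p 1

/-- multiplication by x -/
def Mx : Module.End ℂ RMod :=
  opOf fun p => Finsupp.single (p.1 + 1, p.2.1, p.2.2) 1

/-- multiplication by y -/
def My : Module.End ℂ RMod :=
  opOf fun p => Finsupp.single (p.1, p.2.1 + 1, p.2.2) 1

/-- multiplication by ζ^n -/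
def Mzeta (n : ℤ) : Module.End ℂ RMod :=
  opOf fun p => Finsupp.single (p.1, p.2.1, p.2.2 + n) 1

/-- π_l(e) = -∂/∂x -/
def pl_e : Module.End ℂ RMod := -Dx

/-- π_l(h) = ζ∂/∂ζ - 2x∂/∂x -/
def pl_h : Module.End ℂ RMod := Eul - (2 : ℂ) • (Mx * Dx)

/-- π_l(f) = -xζ∂/∂ζ + x²∂/∂x + ζ⁻²∂/∂y -/
def pl_f : Module.End ℂ RMod := -(Mx * Eul) + Mx * Mx * Dx + Mzeta (-2) * Dy


lemma opOf_single (b : ℕ × ℕ × ℤ → RMod) (p) (c : ℂ) :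
    opOf b (Finsupp.single p c) = c • b p := by simp [opOf]

lemma Dx_single (m n : ℕ) (k : ℤ) (c : ℂ) :
    Dx (Finsupp.single (m, n, k) c) = Finsupp.single (m - 1, n, k) ((m : ℂ) * c) := by
  rw [Dx, opOf_single, smul_smul, Finsupp.smul_single, smul_eq_mul, mul_one, mul_comm]

lemma Dy_single (m n : ℕ) (k : ℤ) (c : ℂ) :
    Dy (Finsupp.single (m, n, k) c) = Finsupp.single (m, n - 1, k) ((n : ℂ) * c) := by
  rw [Dy, opOf_single, smul_smul, Finsupp.smul_single, smul_eq_mul, mul_one, mul_comm]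

lemma Eul_single (m n : ℕ) (k : ℤ) (c : ℂ) :
    Eul (Finsupp.single (m, n, k) c) = Finsupp.single (m, n, k) ((k : ℂ) * c) := by
  rw [Eul, opOf_single, smul_smul, Finsupp.smul_single, smul_eq_mul, mul_one, mul_comm]

lemma Mx_single (m n : ℕ) (k : ℤ) (c : ℂ) :
    Mx (Finsupp.single (m, n, k) c) = Finsupp.single (m + 1, n, k) c := by
  rw [Mx, opOf_single, Finsupp.smul_single, smul_eq_mul, mul_one]

lemma Mzeta_single (j : ℤ) (m n : ℕ) (k : ℤ) (c : ℂ) :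
    Mzeta j (Finsupp.single (m, n, k) c) = Finsupp.single (m, n, k + j) c := by
  rw [Mzeta, opOf_single, Finsupp.smul_single, smul_eq_mul, mul_one]

set_option maxHeartbeats 4000000 in
theorem statement0 :
    ⁅pl_h, pl_e⁆ = (2 : ℂ) • pl_e ∧
    ⁅pl_h, pl_f⁆ = (-2 : ℂ) • pl_f ∧
    ⁅pl_e, pl_f⁆ = pl_h := by
  refine ⟨?_, ?_, ?_⟩ <;>
  · apply Finsupp.lhom_ext
    rintro ⟨m, n, k⟩ c
    obtain _ | _ | m := m <;> obtain _ | _ | n := n <;>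
    · simp only [LieRing.of_associative_ring_bracket, pl_h, pl_e, pl_f, LinearMap.sub_apply,
        LinearMap.add_apply, LinearMap.neg_apply, LinearMap.smul_apply, Module.End.mul_apply,
        map_neg, map_smul, map_add, map_sub, Dx_single, Dy_single, Eul_single, Mx_single,
        Mzeta_single, Nat.succ_sub_one, Nat.add_sub_cancel]
      ext q
      simp only [Finsupp.coe_sub, Finsupp.coe_add, Finsupp.coe_neg, Finsupp.coe_smul,
        Pi.sub_apply, Pi.add_apply, Pi.neg_apply, Pi.smul_apply, Finsupp.single_apply,
        smul_eq_mul]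
      split_ifs <;> push_cast <;> ring

end
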